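/- arXiv:2207.03419 — 5 statements merged into one kernel-verified Lean document; each statement's English description precedes it below -/
import Mathlib

section
/- Let L be an associative ring with identity, M a left L-module, and I a fixed left ideal of L. Suppose that (a) every L-module homomorphism f : X → M from any left ideal X contained in I extends to an L-module homomorphism I → M, and (b) every L-module homomorphism g : Y → M from any left ideal Y containing I extends to an L-module homomorphism L → M. Then M is an injective left L-module. -/
/-!
By Baer's criterion it suffices to extend `f : X → M` from a left ideal `X` to `L`. Hypothesis (a)
extends `f` restricted to `X ⊓ I` to `I`; this extension agrees with `f` on `X ⊓ I`, so the two
glue to `X ⊔ I ⊇ I`, and hypothesis (b) extends the glued map to `L`.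
-/

theorem Submodule.exists_extend_sup_of_eqOn_inf {R N M : Type*} [Ring R] [AddCommGroup N]
    [Module R N] [AddCommGroup M] [Module R M] {X I : Submodule R N} (f : X →ₗ[R] M)
    (g : I →ₗ[R] M) (hfg : ∀ x (hx : x ∈ X ⊓ I), g ⟨x, hx.2⟩ = f ⟨x, hx.1⟩) :
    ∃ F : ↥(X ⊔ I) →ₗ[R] M, ∀ x (hx : x ∈ X), F ⟨x, Submodule.mem_sup_left hx⟩ = f ⟨x, hx⟩ := by
  have hagree : ∀ (x : X) (y : I), (x : N) = y → f x = g y := by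
    rintro ⟨x, hx⟩ ⟨y, hy⟩ (rfl : x = y)
    exact (hfg x ⟨hx, hy⟩).symm
  let F := (⟨X, f⟩ : N →ₗ.[R] M).sup ⟨I, g⟩ hagree
  refine ⟨F.toFun, fun x hx => ?_⟩
  exact ((LinearPMap.left_le_sup _ _ hagree).2 (x := ⟨x, hx⟩) rfl).symm

/-- Baer-type criterion relative to a fixed left ideal `I`:
if every homomorphism from a left ideal contained in `I` extends to `I`,
and every homomorphism from a left ideal containing `I` extends to `L`,
then `M` is injective. -/
theorem stmt0 (L M : Type) [Ring L] [AddCommGroup M] [Module L M]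
    (I : Submodule L L)
    (h1 : ∀ X : Submodule L L, ∀ hXI : X ≤ I, ∀ f : X →ₗ[L] M,
      ∃ g : I →ₗ[L] M, ∀ x (hx : x ∈ X), g ⟨x, hXI hx⟩ = f ⟨x, hx⟩)
    (h2 : ∀ Y : Submodule L L, I ≤ Y → ∀ f : Y →ₗ[L] M,
      ∃ g : L →ₗ[L] M, ∀ y (hy : y ∈ Y), g y = f ⟨y, hy⟩) :
    Module.Injective L M := by
  refine Module.Baer.injective fun X f => ?_
  obtain ⟨g, hg⟩ := h1 (X ⊓ I) inf_le_right (f ∘ₗ Submodule.inclusion inf_le_left)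
  obtain ⟨F, hF⟩ := Submodule.exists_extend_sup_of_eqOn_inf f g hg
  obtain ⟨G, hG⟩ := h2 (X ⊔ I) le_sup_right F
  exact ⟨G, fun x hx => (hG x (Submodule.mem_sup_left hx)).trans (hF x hx)⟩
end

section
/- Let E be a finite directed graph. Then E has disjoint cycles (i.e., every vertex of E is the base of at most one cycle) if and only if every nontrivial closed path in E is a power of a cycle. -/
/-- A directed graph: vertices, edges, source and range maps. -/
structure DirGraph where
  V : Type
  E : Type
  s : E → V
  r : E → V

namespace DirGraph

variable (G : DirGraph)

/-- A (finite) path, encoded as a list of consecutive edges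
(`r eᵢ = s eᵢ₊₁`); the empty list encodes a trivial path. -/
def IsPath (p : List G.E) : Prop := p.Chain' (fun e f => G.r e = G.s f)

/-- The nontrivial path `p` starts at the vertex `v`. -/
def StartsAt (p : List G.E) (v : G.V) : Prop := ∃ e ∈ p.head?, G.s e = v

/-- The nontrivial path `p` ends at the vertex `v`. -/
def EndsAt (p : List G.E) (v : G.V) : Prop := ∃ e ∈ p.getLast?, G.r e = v

/-- A closed path: a nontrivial path whose range equals its source. -/
def IsClosedPath (p : List G.E) : Prop :=
  p ≠ [] ∧ G.IsPath p ∧ ∀ e ∈ p.getLast?, ∀ f ∈ p.head?, G.r e = G.s f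

/-- A cycle: a closed path whose source vertices are pairwise distinct. -/
def IsCycle (p : List G.E) : Prop := G.IsClosedPath p ∧ (p.map G.s).Nodup

/-- `E` has disjoint cycles: each vertex is the base of at most one cycle. -/
def HasDisjointCycles : Prop :=
  ∀ (v : G.V) (c d : List G.E), G.IsCycle c → G.IsCycle d →
    G.StartsAt c v → G.StartsAt d v → c = d

end DirGraph

/-!
If cycles are disjoint, a closed path that is not a cycle has two edges `e`, `f` with the same
source, and cutting there gives two shorter closed paths `e :: y` and `x ++ f :: z`. By induction
they are powers `c₁ᵏ` and `cᵐ` of cycles. Now `c₁` starts at a vertex of `c`, so by disjointness it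
is the rotation of `c` starting there, and putting `c₁ᵏ` back into `cᵐ` gives `cᵏ⁺ᵐ`.

Conversely, if cycles `c` and `d` both start at `v`, then `c ++ d` is a closed path, hence a power
`gᵐ` of a cycle. Counting the visits to `v` gives `m = 2`, so `c ++ d = g ++ g`, and since `g`
visits `v` only once, `c = g = d`.
-/

namespace List

variable {α : Type*}

theorem exists_eq_append_cons_append_cons_of_not_nodup_map {β : Type*} (g : α → β) :
    ∀ {l : List α}, ¬(l.map g).Nodup →
      ∃ x a y b z, l = x ++ a :: (y ++ b :: z) ∧ g a = g b
  | [], h => absurd nodup_nil h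
  | a :: t, h => by
    rw [map_cons, nodup_cons, not_and_or, not_not] at h
    rcases h with hmem | ht
    · obtain ⟨b, hb, hab⟩ := mem_map.1 hmem
      obtain ⟨y, z, rfl⟩ := append_of_mem hb
      exact ⟨[], a, y, b, z, rfl, hab.symm⟩
    · obtain ⟨x, a', y, b, z, rfl, hab⟩ := exists_eq_append_cons_append_cons_of_not_nodup_map g ht
      exact ⟨a :: x, a', y, b, z, rfl, hab⟩

theorem rotate_length_add (l : List α) (n : ℕ) : l.rotate (l.length + n) = l.rotate n := by
  rw [← rotate_rotate, rotate_length]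

theorem flatten_replicate_succ' (l : List α) (m : ℕ) :
    (replicate (m + 1) l).flatten = (replicate m l).flatten ++ l := by
  rw [replicate_succ', flatten_append, flatten_singleton]

theorem append_rotate_length_eq_of_flatten_replicate_eq (c : List α) :
    ∀ {m : ℕ} {x y : List α}, (replicate m c).flatten = x ++ y →
      x ++ c.rotate x.length = c ++ x
  | 0, x, y, h => by
    obtain rfl : x = [] := (append_eq_nil_iff.1 h.symm).1
    simp
  | m + 1, x, y, h => by
    rw [replicate_succ, flatten_cons, append_eq_append_iff] at h
    rcases h with ⟨a, rfl, ha⟩ | ⟨b, rfl, -⟩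
    · rw [length_append, rotate_length_add, append_assoc,
        append_rotate_length_eq_of_flatten_replicate_eq c ha]
    · rw [rotate_append_length_eq, append_assoc]

theorem append_flatten_replicate_rotate_length {c x y : List α} {m : ℕ}
    (h : (replicate m c).flatten = x ++ y) (k : ℕ) :
    x ++ (replicate k (c.rotate x.length)).flatten = (replicate k c).flatten ++ x := by
  induction k with
  | zero => simp
  | succ k ih =>
    rw [replicate_succ, flatten_cons, ← append_assoc,
      append_rotate_length_eq_of_flatten_replicate_eq c h, append_assoc, ih,
      replicate_succ, flatten_cons, append_assoc]

theorem head?_rotate_length_of_flatten_replicate_eq {c x z : List α} {m : ℕ} {a : α}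
    (hc : c ≠ []) (h : (replicate m c).flatten = x ++ a :: z) :
    (c.rotate x.length).head? = some a := by
  have key : x ++ (c.rotate x.length ++ a :: z) = x ++ (a :: z ++ c) := by
    rw [← append_assoc, append_rotate_length_eq_of_flatten_replicate_eq c h, append_assoc, ← h,
      ← flatten_cons, ← replicate_succ, flatten_replicate_succ', h, append_assoc]
  obtain ⟨b, t, hbt⟩ := exists_cons_of_ne_nil (rotate_eq_nil_iff.not.2 hc)
  rw [hbt] at key ⊢
  simpa using (cons.inj (append_cancel_left key)).1

end List

namespace DirGraph

open List

/-- `p` is a path from `v` to `w`; the empty list is the trivial path, from `v` to `v`. -/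
def IsWalk (G : DirGraph) : G.V → List G.E → G.V → Prop
  | v, [], w => v = w
  | v, e :: p, w => G.s e = v ∧ G.IsWalk (G.r e) p w

def IsPowerOfCycle (G : DirGraph) (p : List G.E) : Prop :=
  ∃ (c : List G.E) (m : ℕ), G.IsCycle c ∧ 1 ≤ m ∧ p = (replicate m c).flatten

section

variable {G : DirGraph} {p q : List G.E} {v w : G.V}

theorem isWalk_append : G.IsWalk v (p ++ q) w ↔ ∃ u, G.IsWalk v p u ∧ G.IsWalk u q w := by
  induction p generalizing v with
  | nil => simp [IsWalk]
  | cons e p ih => simp only [cons_append, IsWalk, ih, exists_and_left, and_assoc]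

theorem isPath_singleton (e : G.E) : G.IsPath [e] := isChain_singleton e

theorem isPath_cons_cons {e f : G.E} {t : List G.E} :
    G.IsPath (e :: f :: t) ↔ G.r e = G.s f ∧ G.IsPath (f :: t) :=
  isChain_cons_cons

theorem isWalk_cons_iff {e : G.E} {t : List G.E} :
    G.IsWalk v (e :: t) w ↔
      G.s e = v ∧ G.IsPath (e :: t) ∧ G.r ((e :: t).getLast (cons_ne_nil e t)) = w := by
  induction t generalizing e v with
  | nil => simp [IsWalk, isPath_singleton]
  | cons f t ih =>
    simp only [IsWalk] at ih ⊢
    rw [ih, isPath_cons_cons, getLast_cons_cons]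
    grind

theorem isClosedPath_iff : G.IsClosedPath p ↔ ∃ v, p ≠ [] ∧ G.IsWalk v p v := by
  cases p with
  | nil => simp [IsClosedPath]
  | cons e t => simp [IsClosedPath, isWalk_cons_iff, getLast?_eq_some_getLast]

theorem StartsAt.mem_map (h : G.StartsAt p v) : v ∈ p.map G.s := by
  obtain ⟨e, he, rfl⟩ := h
  exact mem_map_of_mem (mem_of_mem_head? he)

theorem startsAt_append_iff (hp : p ≠ []) : G.StartsAt (p ++ q) v ↔ G.StartsAt p v := by
  obtain ⟨e, t, rfl⟩ := exists_cons_of_ne_nil hp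
  simp [StartsAt]

theorem IsClosedPath.isWalk_of_startsAt (hp : G.IsClosedPath p) (hv : G.StartsAt p v) :
    G.IsWalk v p v := by
  obtain ⟨u, hne, hu⟩ := isClosedPath_iff.1 hp
  obtain ⟨e, t, rfl⟩ := exists_cons_of_ne_nil hne
  obtain rfl : u = v := by simpa [StartsAt, hu.1] using hv
  exact hu

theorem IsClosedPath.rotate (hp : G.IsClosedPath p) (n : ℕ) : G.IsClosedPath (p.rotate n) := by
  obtain ⟨v, hne, hv⟩ := isClosedPath_iff.1 hp
  rw [← take_append_drop (n % p.length) p, isWalk_append] at hv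
  obtain ⟨u, hvu, huv⟩ := hv
  exact isClosedPath_iff.2 ⟨u, rotate_eq_nil_iff.not.2 hne,
    rotate_eq_drop_append_take_mod ▸ isWalk_append.2 ⟨v, huv, hvu⟩⟩

theorem IsCycle.rotate {c : List G.E} (hc : G.IsCycle c) (n : ℕ) : G.IsCycle (c.rotate n) :=
  ⟨hc.1.rotate n, by rw [map_rotate, nodup_rotate]; exact hc.2⟩

theorem IsCycle.not_startsAt_append (h : G.IsCycle (p ++ q)) (hp : G.StartsAt p v)
    (hq : G.StartsAt q v) : False := by
  rw [IsCycle, map_append, nodup_append] at h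
  exact h.2.2.2 v hp.mem_map v hq.mem_map rfl

theorem IsClosedPath.split_of_source_eq {x y z : List G.E} {e f : G.E}
    (hp : G.IsClosedPath (x ++ e :: (y ++ f :: z))) (hef : G.s e = G.s f) :
    G.IsClosedPath (e :: y) ∧ G.IsClosedPath (x ++ f :: z) := by
  obtain ⟨v, -, hv⟩ := isClosedPath_iff.1 hp
  rw [← cons_append, isWalk_append] at hv
  obtain ⟨u, hx, hey⟩ := hv
  rw [isWalk_append] at hey
  obtain ⟨u', hey, hfz⟩ := hey
  obtain rfl : G.s e = u := hey.1
  obtain rfl : G.s f = u' := hfz.1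
  rw [← hef] at hey hfz
  exact ⟨isClosedPath_iff.2 ⟨_, cons_ne_nil e y, hey⟩,
    isClosedPath_iff.2 ⟨v, by simp, isWalk_append.2 ⟨_, hx, hfz⟩⟩⟩

end

theorem HasDisjointCycles.isPowerOfCycle {G : DirGraph} {p : List G.E}
    (hG : G.HasDisjointCycles) (hp : G.IsClosedPath p) : G.IsPowerOfCycle p := by
  by_cases hnd : (p.map G.s).Nodup
  · exact ⟨p, 1, ⟨hp, hnd⟩, le_rfl, by simp⟩
  obtain ⟨x, e, y, f, z, rfl, hef⟩ := exists_eq_append_cons_append_cons_of_not_nodup_map G.s hnd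
  obtain ⟨hb, hq⟩ := hp.split_of_source_eq hef
  obtain ⟨c₁, k, hc₁, hk, hb_eq⟩ := hG.isPowerOfCycle hb
  obtain ⟨c, m, hc, hm, hq_eq⟩ := hG.isPowerOfCycle hq
  have hc₁e : G.StartsAt c₁ (G.s e) :=
    ⟨e, by rw [← head?_flatten_replicate (by omega : k ≠ 0) c₁, ← hb_eq]; rfl, rfl⟩
  have hrot : G.StartsAt (c.rotate x.length) (G.s e) :=
    ⟨f, head?_rotate_length_of_flatten_replicate_eq hc.1.1 hq_eq.symm, hef.symm⟩
  obtain rfl : c₁ = c.rotate x.length := hG _ _ _ hc₁ (hc.rotate _) hc₁e hrot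
  refine ⟨c, k + m, hc, by omega, ?_⟩
  rw [replicate_add, flatten_append, ← hq_eq, ← append_assoc,
    ← append_flatten_replicate_rotate_length hq_eq.symm k, ← hb_eq, append_assoc, cons_append]
termination_by p.length
decreasing_by all_goals subst_vars; simp <;> omega

theorem hasDisjointCycles_of_forall_isPowerOfCycle {G : DirGraph}
    (H : ∀ p, G.IsClosedPath p → G.IsPowerOfCycle p) : G.HasDisjointCycles := by
  classical
  intro v c d hc hd hcv hdv
  have hcd : G.IsClosedPath (c ++ d) := isClosedPath_iff.2 ⟨v, by simp [hc.1.1],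
    isWalk_append.2 ⟨v, hc.1.isWalk_of_startsAt hcv, hd.1.isWalk_of_startsAt hdv⟩⟩
  obtain ⟨g, m, hg, -, hgm⟩ := H _ hcd
  have hvg : v ∈ g.map G.s := by
    have : v ∈ (c ++ d).map G.s := by simp [hcv.mem_map]
    simp only [hgm, map_flatten, map_replicate, mem_flatten, mem_replicate] at this
    obtain ⟨_, ⟨-, rfl⟩, hv⟩ := this
    exact hv
  have hm : m = 2 := by
    have := congrArg (fun l => (l.map G.s).count v) hgm
    simp only [map_append, count_append, map_flatten, map_replicate, count_flatten,
      count_eq_one_of_mem hc.2 hcv.mem_map, count_eq_one_of_mem hd.2 hdv.mem_map,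
      count_eq_one_of_mem hg.2 hvg, sum_replicate] at this
    simpa [eq_comm] using this
  subst hm
  have hgg : c ++ d = g ++ g := by simpa [replicate_succ] using hgm
  rcases append_eq_append_iff.1 hgg with ⟨w, rfl, rfl⟩ | ⟨w, rfl, hw⟩
  · obtain rfl | hw := eq_or_ne w []
    · simp
    exact (hg.not_startsAt_append hcv ((startsAt_append_iff hw).1 hdv)).elim
  · obtain rfl | hw' := eq_or_ne w []
    · simpa using hw
    have hgv : G.StartsAt g v := (startsAt_append_iff hg.1.1).1 hcv
    exact (hc.not_startsAt_append hgv ((startsAt_append_iff hw').1 (hw ▸ hgv))).elim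

end DirGraph

theorem stmt2_general (G : DirGraph) :
    G.HasDisjointCycles ↔
      ∀ p : List G.E, G.IsClosedPath p →
        ∃ (c : List G.E) (m : ℕ), G.IsCycle c ∧ 1 ≤ m ∧
          p = (List.replicate m c).flatten :=
  ⟨fun hG _ hp => hG.isPowerOfCycle hp, DirGraph.hasDisjointCycles_of_forall_isPowerOfCycle⟩

/-- A finite graph has disjoint cycles iff every nontrivial closed path
is a power of a cycle. -/
theorem stmt2 (G : DirGraph) [Finite G.V] [Finite G.E] :
    G.HasDisjointCycles ↔
      ∀ p : List G.E, G.IsClosedPath p →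
        ∃ (c : List G.E) (m : ℕ), G.IsCycle c ∧ 1 ≤ m ∧
          p = (List.replicate m c).flatten :=
  stmt2_general G
end

section
/- Let E be a finite directed graph with disjoint cycles and with no source vertices. Then E contains at least one source cycle, i.e., a cycle with no entrances. -/
/-! Choose for every vertex `v` an edge `f v` ending at `v` (there are no sources). Walking
backwards, `v ↦ s (f v)`, is a self-map of a finite set, and each of its periodic orbits traces a
cycle of `E`. At every vertex of such a cycle that has an entrance, redirect the choice to that
entrance, obtaining `F`. At a periodic point of the new walk that was redirected, the `F`-cycle
and the `f`-cycle are both based there, so by disjointness they coincide, forcing `F = f` there: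
a contradiction. Hence the cycles traced by `F` are `f`-cycles without entrances. -/

open Function Set

theorem Function.exists_mem_periodicPts {α : Type*} [Finite α] [Nonempty α] (f : α → α) :
    ∃ x, x ∈ periodicPts f := by
  obtain ⟨m, n, hne, heq⟩ :=
    Finite.exists_ne_map_eq_of_infinite (f^[·] (Classical.arbitrary α))
  wlog hmn : m < n generalizing m n
  · exact this n m hne.symm heq.symm (by omega)
  refine ⟨f^[m] (Classical.arbitrary α), mk_mem_periodicPts (n := n - m) (by omega) ?_⟩
  rw [IsPeriodicPt, IsFixedPt, ← iterate_add_apply, Nat.sub_add_cancel hmn.le]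
  exact heq.symm

theorem Function.mem_periodicPts_of_eqOn {α : Type*} {f g : α → α} {x : α}
    (hfg : EqOn f g (periodicPts g)) (hx : x ∈ periodicPts g) : x ∈ periodicPts f := by
  have hiter : ∀ n, f^[n] x = g^[n] x := by
    intro n
    induction n with
    | zero => rfl
    | succ n ih =>
      rw [iterate_succ_apply', iterate_succ_apply', ih]
      exact hfg ((bijOn_periodicPts g).mapsTo.iterate n hx)
  obtain ⟨n, hn, hper⟩ := hx
  exact mk_mem_periodicPts hn (by rw [IsPeriodicPt, IsFixedPt, hiter]; exact hper)

namespace DirGraph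

variable {G : DirGraph}

def backMap (F : G.V → G.E) (v : G.V) : G.V := G.s (F v)

/-- The edges `F v, F (backMap F v), …` around the periodic orbit of `v`, listed in path order
(hence reversed); it is `[]` when `v` is not periodic. -/
noncomputable def orbitCycle (F : G.V → G.E) (v : G.V) : List G.E :=
  ((List.range (minimalPeriod (backMap F) v)).map fun n => F ((backMap F)^[n] v)).reverse

section orbitCycle

variable {F : G.V → G.E} {v : G.V}

theorem mem_orbitCycle (hv : v ∈ periodicPts (backMap F)) {e : G.E} :
    e ∈ orbitCycle F v ↔ ∃ n, F ((backMap F)^[n] v) = e := by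
  simp only [orbitCycle, List.mem_reverse, List.mem_map, List.mem_range]
  refine ⟨fun ⟨n, _, he⟩ => ⟨n, he⟩, ?_⟩
  rintro ⟨n, rfl⟩
  exact ⟨n % _, Nat.mod_lt _ (minimalPeriod_pos_of_mem_periodicPts hv),
    by rw [iterate_mod_minimalPeriod_eq]⟩

theorem mem_map_s_orbitCycle (hv : v ∈ periodicPts (backMap F)) {x : G.V} :
    x ∈ (orbitCycle F v).map G.s ↔ ∃ n, (backMap F)^[n + 1] v = x := by
  simp only [List.mem_map, mem_orbitCycle hv, iterate_succ_apply']
  constructor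
  · rintro ⟨e, ⟨n, rfl⟩, rfl⟩
    exact ⟨n, rfl⟩
  · rintro ⟨n, rfl⟩
    exact ⟨_, ⟨n, rfl⟩, rfl⟩

theorem nodup_map_s_orbitCycle (hv : v ∈ periodicPts (backMap F)) :
    ((orbitCycle F v).map G.s).Nodup := by
  have h := Cycle.nodup_coe_iff.1 (nodup_periodicOrbit (f := backMap F) (x := backMap F v))
  rw [minimalPeriod_apply hv] at h
  have hs : (fun n => (backMap F)^[n] (backMap F v)) = G.s ∘ fun n => F ((backMap F)^[n] v) :=
    funext fun n => by rw [← iterate_succ_apply, iterate_succ_apply']; rfl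
  rwa [orbitCycle, List.map_reverse, List.nodup_reverse, List.map_map, ← hs]

theorem getLast?_orbitCycle (hv : v ∈ periodicPts (backMap F)) :
    (orbitCycle F v).getLast? = some (F v) := by
  obtain ⟨k, hk⟩ :=
    Nat.exists_eq_add_one_of_ne_zero (minimalPeriod_pos_of_mem_periodicPts hv).ne'
  rw [orbitCycle, List.getLast?_reverse, hk, List.range_succ_eq_map]
  rfl

theorem startsAt_orbitCycle (hv : v ∈ periodicPts (backMap F)) :
    G.StartsAt (orbitCycle F v) v := by
  obtain ⟨k, hk⟩ :=
    Nat.exists_eq_add_one_of_ne_zero (minimalPeriod_pos_of_mem_periodicPts hv).ne'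
  refine ⟨F ((backMap F)^[k] v), ?_, ?_⟩
  · rw [orbitCycle, List.head?_reverse, hk, List.range_succ]
    simp
  · rw [← backMap, ← iterate_succ_apply' (backMap F) k v]
    show (backMap F)^[k + 1] v = v
    rw [← hk]
    exact iterate_minimalPeriod

theorem isPath_orbitCycle (hF : ∀ v, G.r (F v) = v) : G.IsPath (orbitCycle F v) := by
  change List.IsChain _ _
  rw [orbitCycle, List.isChain_reverse, List.isChain_map, List.isChain_range]
  intro n _
  rw [hF, iterate_succ_apply']
  rfl

theorem isCycle_orbitCycle (hF : ∀ v, G.r (F v) = v) (hv : v ∈ periodicPts (backMap F)) :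
    G.IsCycle (orbitCycle F v) := by
  obtain ⟨e₀, he₀, hs⟩ := startsAt_orbitCycle hv
  refine ⟨⟨?_, isPath_orbitCycle hF, ?_⟩, nodup_map_s_orbitCycle hv⟩
  · rintro h
    simp [h] at he₀
  · intro e he f hf
    rw [getLast?_orbitCycle hv, Option.mem_some_iff] at he
    rw [← he, hF, ← hs, Option.mem_unique hf he₀]

theorem mem_orbitCycle_of_r_mem (hF : ∀ e, G.r e ∈ periodicPts (backMap F) → e = F (G.r e))
    (hv : v ∈ periodicPts (backMap F)) {e : G.E} (he : G.r e ∈ (orbitCycle F v).map G.s) :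
    e ∈ orbitCycle F v := by
  obtain ⟨n, hn⟩ := (mem_map_s_orbitCycle hv).1 he
  rw [hF e (hn ▸ (bijOn_periodicPts _).mapsTo.iterate (n + 1) hv), ← hn]
  exact (mem_orbitCycle hv).2 ⟨n + 1, rfl⟩

end orbitCycle

theorem HasDisjointCycles.eq_of_mem_periodicPts (hdc : G.HasDisjointCycles)
    {f F : G.V → G.E} (hf : ∀ v, G.r (f v) = v) (hF : ∀ v, G.r (F v) = v) {v : G.V}
    (hvf : v ∈ periodicPts (backMap f)) (hvF : v ∈ periodicPts (backMap F)) : F v = f v := by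
  -- the two orbits trace cycles based at `v`, and `f v` is the only edge of the `f`-cycle into `v`
  have hcycle : orbitCycle F v = orbitCycle f v :=
    hdc v _ _ (isCycle_orbitCycle hF hvF) (isCycle_orbitCycle hf hvf)
      (startsAt_orbitCycle hvF) (startsAt_orbitCycle hvf)
  obtain ⟨n, hn⟩ : ∃ n, f ((backMap f)^[n] v) = F v :=
    (mem_orbitCycle hvf).1 (hcycle ▸ (mem_orbitCycle hvF).2 ⟨0, rfl⟩)
  have hback : (backMap f)^[n] v = v := by rw [← hf ((backMap f)^[n] v), hn, hF]
  rw [← hn, hback]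

theorem HasDisjointCycles.exists_eq_of_r_mem_periodicPts (hdc : G.HasDisjointCycles)
    (hin : ∀ v, ∃ e, G.r e = v) :
    ∃ F : G.V → G.E, (∀ v, G.r (F v) = v) ∧
      ∀ e, G.r e ∈ periodicPts (backMap F) → e = F (G.r e) := by
  classical
  choose f hf using hin
  let Entered (v : G.V) : Prop := v ∈ periodicPts (backMap f) ∧ ∃ e, G.r e = v ∧ e ≠ f v
  let F (v : G.V) : G.E := if h : Entered v then h.2.choose else f v
  have hF : ∀ v, G.r (F v) = v := fun v => by
    by_cases h : Entered v
    · simpa [F, h] using h.2.choose_spec.1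
    · simpa [F, h] using hf v
  have hne : ∀ v, Entered v → F v ≠ f v := fun v h => by
    simpa [F, h] using h.2.choose_spec.2
  have hFf : EqOn F f (periodicPts (backMap F)) := fun w hw => by
    by_cases hw' : Entered w
    · exact hdc.eq_of_mem_periodicPts hf hF hw'.1 hw
    · exact dif_neg hw'
  refine ⟨F, hF, fun e he => ?_⟩
  by_contra h
  have hper : G.r e ∈ periodicPts (backMap f) :=
    mem_periodicPts_of_eqOn (fun w hw => congrArg G.s (hFf hw).symm) he
  exact hne _ ⟨hper, e, rfl, hFf he ▸ h⟩ (hFf he)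

end DirGraph

theorem stmt4_general (G : DirGraph) [Finite G.V] [Nonempty G.V]
    (hdc : G.HasDisjointCycles) (hnosrc : ∀ v : G.V, ∃ e : G.E, G.r e = v) :
    ∃ c : List G.E, G.IsCycle c ∧ ∀ e : G.E, G.r e ∈ c.map G.s → e ∈ c := by
  obtain ⟨F, hF, hin⟩ := hdc.exists_eq_of_r_mem_periodicPts hnosrc
  obtain ⟨v, hv⟩ := exists_mem_periodicPts (DirGraph.backMap F)
  exact ⟨_, DirGraph.isCycle_orbitCycle hF hv, fun e => DirGraph.mem_orbitCycle_of_r_mem hin hv⟩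

/-- A finite nonempty graph with disjoint cycles and no source vertices
contains a source cycle (a cycle without entrances). -/
theorem stmt4 (G : DirGraph) [Finite G.V] [Finite G.E] [Nonempty G.V]
    (hdc : G.HasDisjointCycles) (hnosrc : ∀ v : G.V, ∃ e : G.E, G.r e = v) :
    ∃ c : List G.E, G.IsCycle c ∧ ∀ e : G.E, G.r e ∈ c.map G.s → e ∈ c :=
  stmt4_general G hdc hnosrc
end

section
/- Let E be a finite graph with disjoint cycles and c a cycle (or sink) in E. Then no path in P^E_c ends with a traverse of a closed path; that is, if γ ∈ P^E_c then γ cannot be written as γ'δ for a closed path δ with s(δ) = r(δ) = r(γ). -/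
/-!
A closed path `δ` at `v` ends with the cycle `c` at `v`; this is proved by strong induction on
the length of `δ`. If the sources along `δ` are distinct, `δ` is itself a cycle at `v`, hence
`δ = c`. Otherwise `δ = A μ B` where `μ` is a closed path at the source `u` of `B`. Cutting out
`μ` gives a shorter closed path `A B` at `v`, so `c` is a suffix of `A B`: either of `B`, and we
are done, or `c = A₂ B`. In the latter case the rotation `B A₂` is the cycle at `u`, so by
induction it is a suffix of `μ`, and then `c = A₂ B` is a suffix of `μ B`.

A path ending at a sink cannot end with a closed path, as that would have to leave the sink.
-/

namespace DirGraph

variable {G : DirGraph}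

theorem isPath_append {p q : List G.E} :
    G.IsPath (p ++ q) ↔
      G.IsPath p ∧ G.IsPath q ∧ ∀ e ∈ p.getLast?, ∀ f ∈ q.head?, G.r e = G.s f :=
  List.isChain_append

theorem isPath_append_iff_of_startsAt {p q : List G.E} {u : G.V} (hq : G.StartsAt q u) :
    G.IsPath (p ++ q) ↔ G.IsPath p ∧ G.IsPath q ∧ ∀ e ∈ p.getLast?, G.r e = u := by
  obtain ⟨f, hf, rfl⟩ := hq
  rw [Option.mem_def] at hf
  simp only [isPath_append, hf, Option.mem_def, Option.some.injEq, forall_eq']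

theorem IsClosedPath.append_comm {p q : List G.E} (h : G.IsClosedPath (p ++ q)) :
    G.IsClosedPath (q ++ p) := by
  rcases eq_or_ne p [] with rfl | hp
  · simpa using h
  rcases eq_or_ne q [] with rfl | hq
  · simpa using h
  obtain ⟨-, hpq, hclosed⟩ := h
  obtain ⟨hp', hq', hjoin⟩ := isPath_append.1 hpq
  refine ⟨by simp [hq], isPath_append.2 ⟨hq', hp', ?_⟩, ?_⟩
  · simpa [hp, hq] using hclosed
  · simpa [hp, hq] using hjoin

theorem IsCycle.append_comm {p q : List G.E} (h : G.IsCycle (p ++ q)) : G.IsCycle (q ++ p) :=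
  ⟨h.1.append_comm, (List.perm_append_comm.map G.s).nodup_iff.1 h.2⟩

theorem StartsAt.ne_nil {p : List G.E} {v : G.V} (h : G.StartsAt p v) : p ≠ [] := by
  rintro rfl
  simp [StartsAt] at h

theorem StartsAt.eq {p : List G.E} {u v : G.V} (hu : G.StartsAt p u) (hv : G.StartsAt p v) :
    u = v := by
  obtain ⟨e, he, rfl⟩ := hu
  obtain ⟨f, hf, rfl⟩ := hv
  rw [Option.mem_unique he hf]

theorem startsAt_append_of_ne_nil {p q : List G.E} {v : G.V} (hp : p ≠ []) :
    G.StartsAt (p ++ q) v ↔ G.StartsAt p v := by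
  simp [StartsAt, hp]

theorem StartsAt.append_right {p : List G.E} {v : G.V} (h : G.StartsAt p v) (q : List G.E) :
    G.StartsAt (p ++ q) v :=
  (startsAt_append_of_ne_nil h.ne_nil).2 h

theorem endsAt_iff {p : List G.E} {v : G.V} :
    G.EndsAt p v ↔ p ≠ [] ∧ ∀ e ∈ p.getLast?, G.r e = v := by
  constructor
  · rintro ⟨e, he, rfl⟩
    exact ⟨fun hp => by simp [hp] at he, fun f hf => by rw [Option.mem_unique hf he]⟩
  · rintro ⟨hp, h⟩
    obtain ⟨e, he⟩ := Option.ne_none_iff_exists'.1 (List.getLast?_eq_none_iff.not.2 hp)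
    exact ⟨e, he, h e he⟩

theorem endsAt_append_of_ne_nil {p q : List G.E} {v : G.V} (hq : q ≠ []) :
    G.EndsAt (p ++ q) v ↔ G.EndsAt q v := by
  simp [EndsAt, hq]

theorem exists_eq_append_append_of_not_nodup {p : List G.E} (h : ¬(p.map G.s).Nodup) :
    ∃ A μ B u, p = A ++ μ ++ B ∧ G.StartsAt μ u ∧ G.StartsAt B u := by
  induction p with
  | nil => simp at h
  | cons a t ih =>
    rw [List.map_cons, List.nodup_cons, not_and_or, not_not] at h
    rcases h with ha | ht
    · obtain ⟨y, hy, hya⟩ := List.mem_map.1 ha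
      obtain ⟨μ, B, rfl⟩ := List.append_of_mem hy
      exact ⟨[], a :: μ, y :: B, G.s a, rfl, ⟨a, rfl, rfl⟩, ⟨y, rfl, hya⟩⟩
    · obtain ⟨A, μ, B, u, rfl, hμ, hB⟩ := ih ht
      exact ⟨a :: A, μ, B, u, rfl, hμ, hB⟩

def IsClosedPathAt (p : List G.E) (v : G.V) : Prop :=
  G.IsPath p ∧ G.StartsAt p v ∧ G.EndsAt p v

theorem IsClosedPath.isClosedPathAt {p : List G.E} {v : G.V} (h : G.IsClosedPath p)
    (hv : G.EndsAt p v) : G.IsClosedPathAt p v := by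
  obtain ⟨hp, hpath, hclosed⟩ := h
  obtain ⟨e, he, rfl⟩ := hv
  obtain ⟨f, hf⟩ := Option.ne_none_iff_exists'.1 (List.head?_eq_none_iff.not.2 hp)
  exact ⟨hpath, ⟨f, hf, (hclosed e he f hf).symm⟩, ⟨e, he, rfl⟩⟩

theorem IsClosedPathAt.isCycle {p : List G.E} {v : G.V} (h : G.IsClosedPathAt p v)
    (hnd : (p.map G.s).Nodup) : G.IsCycle p := by
  refine ⟨⟨h.2.1.ne_nil, h.1, fun e' he' f' hf' => ?_⟩, hnd⟩
  obtain ⟨-, ⟨f, hf, hfv⟩, ⟨e, he, hev⟩⟩ := h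
  rw [Option.mem_unique he' he, Option.mem_unique hf' hf, hev, hfv]

theorem IsClosedPathAt.erase_middle {A μ B : List G.E} {u v : G.V}
    (h : G.IsClosedPathAt (A ++ μ ++ B) v) (hμ : G.StartsAt μ u) (hB : G.StartsAt B u) :
    G.IsClosedPathAt (A ++ B) v := by
  obtain ⟨hpath, hstart, hend⟩ := h
  obtain ⟨hAμ, hBpath, -⟩ := isPath_append.1 hpath
  obtain ⟨hA, -, hAu⟩ := (isPath_append_iff_of_startsAt hμ).1 hAμ
  refine ⟨(isPath_append_iff_of_startsAt hB).2 ⟨hA, hBpath, hAu⟩, ?_,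
    (endsAt_append_of_ne_nil hB.ne_nil).2 ((endsAt_append_of_ne_nil hB.ne_nil).1 hend)⟩
  rcases eq_or_ne A [] with rfl | hA
  · rw [List.nil_append] at hstart ⊢
    rwa [(hμ.append_right B).eq hstart] at hB
  · rw [List.append_assoc, startsAt_append_of_ne_nil hA] at hstart
    exact (startsAt_append_of_ne_nil hA).2 hstart

theorem IsPath.isClosedPathAt_middle {A μ B : List G.E} {u : G.V}
    (h : G.IsPath (A ++ μ ++ B)) (hμ : G.StartsAt μ u) (hB : G.StartsAt B u) :
    G.IsClosedPathAt μ u := by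
  rw [List.append_assoc] at h
  obtain ⟨hμpath, -, hμu⟩ := (isPath_append_iff_of_startsAt hB).1 (isPath_append.1 h).2.1
  exact ⟨hμpath, hμ, endsAt_iff.2 ⟨hμ.ne_nil, hμu⟩⟩

theorem HasDisjointCycles.suffix_of_isClosedPathAt (hdc : G.HasDisjointCycles)
    {c δ : List G.E} {v : G.V} (hc : G.IsCycle c) (hcv : G.StartsAt c v)
    (hδ : G.IsClosedPathAt δ v) : c <:+ δ := by
  by_cases hnd : (δ.map G.s).Nodup
  · rw [hdc v c δ hc (hδ.isCycle hnd) hcv hδ.2.1]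
  obtain ⟨A, μ, B, u, hδAμB, hμ, hB⟩ := exists_eq_append_append_of_not_nodup hnd
  rw [hδAμB] at hδ ⊢
  have hμlen : 0 < μ.length := List.length_pos_iff.2 hμ.ne_nil
  have hBlen : 0 < B.length := List.length_pos_iff.2 hB.ne_nil
  have hAB : c <:+ A ++ B := hdc.suffix_of_isClosedPathAt hc hcv (hδ.erase_middle hμ hB)
  rcases List.suffix_or_suffix_of_suffix hAB (List.suffix_append A B) with hcB | ⟨A₂, rfl⟩
  · exact hcB.trans (List.suffix_append _ _)
  · have hrot : B ++ A₂ <:+ μ := hdc.suffix_of_isClosedPathAt hc.append_comm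
      (hB.append_right A₂) (hδ.1.isClosedPathAt_middle hμ hB)
    rw [List.append_assoc]
    exact (List.suffix_append_self_iff.2 ((List.suffix_append B A₂).trans hrot)).trans
      (List.suffix_append A _)
termination_by δ.length
decreasing_by all_goals simp only [hδAμB, List.length_append]; omega

end DirGraph

theorem stmt7_general (G : DirGraph)
    (hdc : G.HasDisjointCycles) (γ : List G.E)
    (hP : (∃ w : G.V, (∀ e : G.E, G.s e ≠ w) ∧ ∀ e ∈ γ.getLast?, G.r e = w) ∨
      (∃ (c : List G.E) (v : G.V), G.IsCycle c ∧ G.StartsAt c v ∧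
        (∀ e ∈ γ.getLast?, G.r e = v) ∧ ¬∃ γ' : List G.E, γ = γ' ++ c)) :
    ¬∃ (γ' δ : List G.E), δ ≠ [] ∧ G.IsClosedPath δ ∧ γ = γ' ++ δ := by
  rintro ⟨γ', δ, hδne, hδ, rfl⟩
  have hδat : ∀ {v}, (∀ e ∈ (γ' ++ δ).getLast?, G.r e = v) → G.IsClosedPathAt δ v := fun h =>
    hδ.isClosedPathAt (DirGraph.endsAt_iff.2 ⟨hδne, by simpa [hδne] using h⟩)
  rcases hP with ⟨w, hsink, hw⟩ | ⟨c, v, hc, hcv, hv, hnot⟩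
  · obtain ⟨e, -, he⟩ := (hδat hw).2.1
    exact hsink e he
  · obtain ⟨δ₀, rfl⟩ := hdc.suffix_of_isClosedPathAt hc hcv (hδat hv)
    exact hnot ⟨γ' ++ δ₀, by simp⟩

/-- In a graph with disjoint cycles, no path in `P^E_c` (for `c` a sink or a
proper cycle) ends with a complete traverse of a closed path. -/
theorem stmt7 (G : DirGraph) [Finite G.V] [Finite G.E]
    (hdc : G.HasDisjointCycles) (γ : List G.E) (hγ : G.IsPath γ)
    (hP : (∃ w : G.V, (∀ e : G.E, G.s e ≠ w) ∧ ∀ e ∈ γ.getLast?, G.r e = w) ∨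
      (∃ (c : List G.E) (v : G.V), G.IsCycle c ∧ G.StartsAt c v ∧
        (∀ e ∈ γ.getLast?, G.r e = v) ∧ ¬∃ γ' : List G.E, γ = γ' ++ c)) :
    ¬∃ (γ' δ : List G.E), δ ≠ [] ∧ G.IsClosedPath δ ∧ γ = γ' ++ δ :=
  stmt7_general G hdc γ hP
end

section
/- Let E be a finite graph with a source loop τ based at vertex t (so τ is a loop at t and no other edge ends at t). Let ε be an edge with s(ε) = t, ε ≠ τ. Then in L_K(E), for every polynomial p(x) = 1 + a₁x + ⋯ + a_m x^m ∈ K[x] with constant term 1 and every ℓ ≥ 0, the element ε*(τ*)^ℓ belongs to the left ideal L_K(E)·p(τ), where p(τ) = 1 + a₁τ + ⋯ + a_mτ^m. -/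
open scoped Classical

/-- Generators of the Leavitt path algebra: vertices, edges and ghost edges. -/
inductive LGen (G : DirGraph) where
  | vtx : G.V → LGen G
  | edg : G.E → LGen G
  | ghd : G.E → LGen G

variable (K : Type) [Field K] (G : DirGraph) [Fintype G.E]

open FreeAlgebra in
/-- The defining relations of the Leavitt path algebra `L_K(E)`. -/
inductive LRel : FreeAlgebra K (LGen G) → FreeAlgebra K (LGen G) → Prop
  | vtx_mul (u v : G.V) :
      LRel (ι K (LGen.vtx u) * ι K (LGen.vtx v))
        (if u = v then ι K (LGen.vtx u) else 0)
  | s_edge (e : G.E) : LRel (ι K (LGen.vtx (G.s e)) * ι K (LGen.edg e)) (ι K (LGen.edg e))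
  | edge_r (e : G.E) : LRel (ι K (LGen.edg e) * ι K (LGen.vtx (G.r e))) (ι K (LGen.edg e))
  | r_ghost (e : G.E) : LRel (ι K (LGen.vtx (G.r e)) * ι K (LGen.ghd e)) (ι K (LGen.ghd e))
  | ghost_s (e : G.E) : LRel (ι K (LGen.ghd e) * ι K (LGen.vtx (G.s e))) (ι K (LGen.ghd e))
  | ck1 (e f : G.E) :
      LRel (ι K (LGen.ghd e) * ι K (LGen.edg f))
        (if e = f then ι K (LGen.vtx (G.r f)) else 0)
  | ck2 (v : G.V) (h : ∃ e, G.s e = v) :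
      LRel (ι K (LGen.vtx v))
        (∑ e ∈ Finset.univ.filter (fun e => G.s e = v),
          ι K (LGen.edg e) * ι K (LGen.ghd e))

/-- The Leavitt path algebra `L_K(E)` of a finite graph `E` over a field `K`. -/
def LPA := RingQuot (LRel K G)

noncomputable instance : Ring (LPA K G) := inferInstanceAs (Ring (RingQuot (LRel K G)))
noncomputable instance : Algebra K (LPA K G) :=
  inferInstanceAs (Algebra K (RingQuot (LRel K G)))

/-- The vertex idempotent `v ∈ L_K(E)`. -/
noncomputable def vtxL (v : G.V) : LPA K G :=
  RingQuot.mkAlgHom K (LRel K G) (FreeAlgebra.ι K (LGen.vtx v))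

/-- The (real) edge `e ∈ L_K(E)`. -/
noncomputable def edgL (e : G.E) : LPA K G :=
  RingQuot.mkAlgHom K (LRel K G) (FreeAlgebra.ι K (LGen.edg e))

/-- The ghost edge `e* ∈ L_K(E)`. -/
noncomputable def ghdL (e : G.E) : LPA K G :=
  RingQuot.mkAlgHom K (LRel K G) (FreeAlgebra.ι K (LGen.ghd e))

/-- The element of `L_K(E)` given by a path `p` ending at `v` (the trivial
path at `v` yields the vertex idempotent `v`). -/
noncomputable def pathTo (p : List G.E) (v : G.V) : LPA K G :=
  (p.map (edgL K G)).prod * vtxL K G v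

/-- The element `p* ∈ L_K(E)` for a path `p` ending at `v`. -/
noncomputable def starPathTo (p : List G.E) (v : G.V) : LPA K G :=
  vtxL K G v * (p.reverse.map (ghdL K G)).prod

/-!
Write `y ℓ = ε*(τ*)^ℓ`. Since `τ*τ = r(τ) = t` is absorbed by `y ℓ` and `ε*τ = 0`, we have
`y (ℓ + 1) τ = y ℓ` and `y 0 τ = 0`: right multiplication by `τ` lowers the index. Writing
`p = 1 + X q`, this gives `y ℓ = y ℓ p(τ) - y (ℓ - 1) q(τ)` (without the second term when
`ℓ = 0`), and induction on `ℓ` puts every `y ℓ q(τ)`, in particular `y ℓ`, into `L_K(E) p(τ)`.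
-/

open Polynomial

theorem mul_aeval_eq_coeff_zero_smul_add {R A : Type*} [CommSemiring R] [Semiring A] [Algebra R A]
    (a b : A) (q : R[X]) :
    b * aeval a q = q.coeff 0 • b + b * a * aeval a q.divX := by
  conv_lhs => rw [← X_mul_divX_add q]
  rw [map_add, map_mul, aeval_X, aeval_C, mul_add, add_comm, Algebra.smul_def,
    Algebra.commutes, mul_assoc]

theorem mem_span_aeval_of_mul_eq_pred {R A : Type*} [CommSemiring R] [Ring A] [Algebra R A]
    {a : A} {y : ℕ → A} (h0 : y 0 * a = 0) (hsucc : ∀ n, y (n + 1) * a = y n)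
    {p : R[X]} (hp : p.coeff 0 = 1) (ℓ : ℕ) :
    y ℓ ∈ Submodule.span A {aeval a p} := by
  set S := Submodule.span A {aeval a p}
  have hgen : ∀ b : A, b * aeval a p ∈ S := fun b =>
    Submodule.smul_mem S b (Submodule.mem_span_singleton_self _)
  -- Strengthen to all multiples `y ℓ ⬝ q(a)`, so the induction can absorb `(p / X)(a)`.
  suffices h : ∀ q : R[X], y ℓ * aeval a q ∈ S by simpa using h 1
  induction ℓ with
  | zero =>
    intro q
    have hy : y 0 = y 0 * aeval a p := by
      simp [mul_aeval_eq_coeff_zero_smul_add a (y 0) p, h0, hp]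
    rw [mul_aeval_eq_coeff_zero_smul_add, h0, zero_mul, add_zero, hy]
    exact Submodule.smul_of_tower_mem S _ (hgen _)
  | succ n ih =>
    intro q
    have hy : y (n + 1) = y (n + 1) * aeval a p - y n * aeval a p.divX := by
      simp [mul_aeval_eq_coeff_zero_smul_add a (y (n + 1)) p, hsucc, hp]
    rw [mul_aeval_eq_coeff_zero_smul_add, hsucc, hy]
    exact S.add_mem (S.smul_of_tower_mem _ (S.sub_mem (hgen _) (ih _))) (ih _)

section LeavittPathAlgebra

variable {K G}

theorem mkAlgHom_mul_of_lRel {x y z : FreeAlgebra K (LGen G)} (h : LRel K G (x * y) z) :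
    RingQuot.mkAlgHom K (LRel K G) x * RingQuot.mkAlgHom K (LRel K G) y =
      RingQuot.mkAlgHom K (LRel K G) z :=
  (map_mul _ x y).symm.trans (RingQuot.mkAlgHom_rel K h)

theorem ghdL_mul_edgL (e f : G.E) :
    ghdL K G e * edgL K G f = if e = f then vtxL K G (G.r f) else 0 := by
  refine (mkAlgHom_mul_of_lRel (LRel.ck1 e f)).trans ?_
  split_ifs
  · rfl
  · exact map_zero _

theorem ghdL_mul_vtxL_source (e : G.E) : ghdL K G e * vtxL K G (G.s e) = ghdL K G e :=
  mkAlgHom_mul_of_lRel (LRel.ghost_s e)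

theorem ghdL_mul_ghdL_pow_mul_vtxL {τ ε : G.E} (hε : G.s ε = G.s τ) (n : ℕ) :
    ghdL K G ε * ghdL K G τ ^ n * vtxL K G (G.s τ) = ghdL K G ε * ghdL K G τ ^ n := by
  cases n with
  | zero => rw [pow_zero, mul_one, ← hε, ghdL_mul_vtxL_source]
  | succ n => rw [pow_succ, ← mul_assoc, mul_assoc _ (ghdL K G τ), ghdL_mul_vtxL_source]

theorem ghdL_mul_ghdL_pow_succ_mul_edgL {τ ε : G.E} (hloop : G.r τ = G.s τ)
    (hε : G.s ε = G.s τ) (n : ℕ) :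
    ghdL K G ε * ghdL K G τ ^ (n + 1) * edgL K G τ = ghdL K G ε * ghdL K G τ ^ n := by
  rw [pow_succ, ← mul_assoc, mul_assoc, ghdL_mul_edgL, if_pos rfl, hloop,
    ghdL_mul_ghdL_pow_mul_vtxL hε]

end LeavittPathAlgebra

theorem stmt15 (τ : G.E) (hloop : G.r τ = G.s τ)
    (ε : G.E) (hε : G.s ε = G.s τ) (hne : ε ≠ τ)
    (p : Polynomial K) (hp : p.coeff 0 = 1) (ℓ : ℕ) :
    ghdL K G ε * (ghdL K G τ) ^ ℓ ∈
      Submodule.span (LPA K G) {Polynomial.aeval (edgL K G τ) p} := by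
  refine mem_span_aeval_of_mul_eq_pred (y := fun n => ghdL K G ε * ghdL K G τ ^ n) ?_
    (ghdL_mul_ghdL_pow_succ_mul_edgL hloop hε) hp ℓ
  simp only [pow_zero, mul_one, ghdL_mul_edgL, if_neg hne]
end
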